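/- Let P ≥ 1, let f_1, …, f_P ∈ ℝ satisfy f_i − f_j ∉ ℤ for all i ≠ j, and let α_1, …, α_P ∈ ℂ with Σ_{p=1}^{P} |α_p|² > 0. For each M ≥ 1 let h_M = Σ_{p=1}^{P} α_p · a_M(f_p) ∈ ℂ^M. Then there exists M₀ such that for all M ≥ M₀, h_M ≠ 0; in fact ‖h_M‖² ≥ (M/2) · Σ_{p=1}^{P} |α_p|² for all sufficiently large M. -/

import Mathlib

/-!
Expanding `‖h_M‖²` gives the diagonal terms `M |α_p|²` and the cross terms
`conj α_p α_q ⟪a_M(f_p), a_M(f_q)⟫`. Each such inner product is the geometric sum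
`∑_{m<M} z^m` with `z = e^{2πi(f_p − f_q)}`, and `z ≠ 1` on the unit circle bounds it by
`2 / ‖z − 1‖` uniformly in `M`. Hence `‖h_M‖² ≥ M · Σ|α_p|² − C` for a constant `C`,
which exceeds `(M/2) · Σ|α_p|²` as soon as `M ≥ 2C / Σ|α_p|²`.
-/

open scoped Real

/-- The steering vector `a_M(f) ∈ ℂ^M`, whose `m`-th entry is `e^{-2πi m f}`. -/
noncomputable def steer (M : ℕ) (f : ℝ) : EuclideanSpace ℂ (Fin M) :=
  WithLp.toLp 2 (fun m => Complex.exp (-(2 * (π : ℂ) * Complex.I * ((m : ℕ) : ℂ) * (f : ℂ))))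

open scoped InnerProductSpace ComplexConjugate
open Complex Finset

section AlmostOrthogonal

variable {𝕜 E ι : Type*} [RCLike 𝕜] [NormedAddCommGroup E] [InnerProductSpace 𝕜 E]
  [Fintype ι] [DecidableEq ι]

theorem sum_sq_sub_le_norm_sum_smul_sq (α : ι → 𝕜) (v : ι → E) :
    ∑ p, ‖α p‖ ^ 2 * ‖v p‖ ^ 2
        - ∑ p, ∑ q ∈ univ.erase p, ‖α p‖ * ‖α q‖ * ‖⟪v p, v q⟫_𝕜‖
      ≤ ‖∑ p, α p • v p‖ ^ 2 := by
  have hsq : ‖∑ p, α p • v p‖ ^ 2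
      = ∑ p, ∑ q, RCLike.re (conj (α p) * α q * ⟪v p, v q⟫_𝕜) := by
    rw [@norm_sq_eq_re_inner 𝕜, sum_inner, map_sum]
    refine sum_congr rfl fun p _ => ?_
    rw [inner_sum, map_sum]
    refine sum_congr rfl fun q _ => ?_
    rw [inner_smul_left, inner_smul_right]
    ring_nf
  have hdiag : ∀ p, RCLike.re (conj (α p) * α p * ⟪v p, v p⟫_𝕜) = ‖α p‖ ^ 2 * ‖v p‖ ^ 2 := by
    intro p
    rw [RCLike.conj_mul, inner_self_eq_norm_sq_to_K, ← RCLike.ofReal_pow, ← RCLike.ofReal_pow,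
      ← RCLike.ofReal_mul, RCLike.ofReal_re]
  have hoff : ∀ p q, -(‖α p‖ * ‖α q‖ * ‖⟪v p, v q⟫_𝕜‖)
      ≤ RCLike.re (conj (α p) * α q * ⟪v p, v q⟫_𝕜) := by
    intro p q
    have := RCLike.abs_re_le_norm (conj (α p) * α q * ⟪v p, v q⟫_𝕜)
    rw [norm_mul, norm_mul, RCLike.norm_conj] at this
    exact (abs_le.mp this).1
  rw [hsq, ← sum_sub_distrib]
  refine sum_le_sum fun p _ => ?_
  rw [← add_sum_erase _ _ (mem_univ p), hdiag, sub_eq_add_neg, ← sum_neg_distrib]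
  exact add_le_add_right (sum_le_sum fun q _ => hoff p q) _

end AlmostOrthogonal

theorem norm_geom_sum_le_of_norm_eq_one {z : ℂ} (hz : ‖z‖ = 1) (hz1 : z ≠ 1) (M : ℕ) :
    ‖∑ m ∈ range M, z ^ m‖ ≤ 2 / ‖z - 1‖ := by
  rw [geom_sum_eq hz1, norm_div]
  gcongr
  calc ‖z ^ M - 1‖ ≤ ‖z ^ M‖ + ‖(1 : ℂ)‖ := norm_sub_le _ _
    _ = 2 := by rw [norm_pow, hz]; norm_num

theorem exp_two_pi_I_mul_ne_one {x : ℝ} (hx : ∀ k : ℤ, x ≠ k) : exp (2 * π * I * x) ≠ 1 := by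
  rw [Ne, exp_eq_one_iff]
  rintro ⟨k, hk⟩
  refine hx k (ofReal_injective ?_)
  have h2πI : 2 * (π : ℂ) * I ≠ 0 := by simp [Real.pi_ne_zero]
  simpa using mul_left_cancel₀ h2πI (hk.trans (mul_comm _ _))

theorem norm_steer_sq (M : ℕ) (f : ℝ) : ‖steer M f‖ ^ 2 = M := by
  simp [EuclideanSpace.norm_sq_eq, steer, norm_exp]

theorem inner_steer (M : ℕ) (f g : ℝ) :
    ⟪steer M f, steer M g⟫_ℂ = ∑ m ∈ range M, exp (2 * π * I * (f - g)) ^ m := by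
  rw [← Fin.sum_univ_eq_sum_range]
  simp only [PiLp.inner_apply, RCLike.inner_apply', steer]
  refine sum_congr rfl fun m _ => ?_
  rw [← exp_nat_mul, ← exp_conj, ← exp_add]
  congr 1
  simp only [map_neg, map_mul, conj_I, conj_ofReal, conj_natCast, map_ofNat]
  ring

theorem norm_inner_steer_le (M : ℕ) {f g : ℝ} (hfg : ∀ k : ℤ, f - g ≠ k) :
    ‖⟪steer M f, steer M g⟫_ℂ‖ ≤ 2 / ‖exp (2 * π * I * (f - g)) - 1‖ := by
  rw [inner_steer]
  refine norm_geom_sum_le_of_norm_eq_one ?_ ?_ M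
  · rw [norm_exp]; simp
  · exact_mod_cast exp_two_pi_I_mul_ne_one hfg

theorem exists_mul_sub_le_norm_sum_smul_steer_sq {ι : Type*} [Fintype ι] (f : ι → ℝ)
    (hf : ∀ i j, i ≠ j → ∀ k : ℤ, f i - f j ≠ k) (α : ι → ℂ) :
    ∃ C : ℝ, ∀ M : ℕ, M * ∑ p, ‖α p‖ ^ 2 - C ≤ ‖∑ p, α p • steer M (f p)‖ ^ 2 := by
  classical
  refine ⟨∑ p, ∑ q ∈ univ.erase p, ‖α p‖ * ‖α q‖ * (2 / ‖exp (2 * π * I * (f p - f q)) - 1‖),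
    fun M => le_trans ?_ (sum_sq_sub_le_norm_sum_smul_sq α _)⟩
  rw [mul_sum]
  simp only [norm_steer_sq, mul_comm (M : ℝ)]
  gcongr with p - q hq
  exact norm_inner_steer_le M (hf p q (ne_of_mem_erase hq).symm)

theorem stmt12_general (P : ℕ) (f : Fin P → ℝ)
    (hf : ∀ i j : Fin P, i ≠ j → ∀ k : ℤ, f i - f j ≠ (k : ℝ))
    (α : Fin P → ℂ) (hα : 0 < ∑ p, ‖α p‖ ^ 2) :
    ∃ M₀ : ℕ, ∀ M : ℕ, M₀ ≤ M →
      (∑ p, α p • steer M (f p)) ≠ 0 ∧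
      ((M : ℝ) / 2) * ∑ p, ‖α p‖ ^ 2 ≤ ‖∑ p, α p • steer M (f p)‖ ^ 2 := by
  set S := ∑ p, ‖α p‖ ^ 2
  obtain ⟨C, hC⟩ := exists_mul_sub_le_norm_sum_smul_steer_sq f hf α
  refine ⟨max 1 ⌈2 * C / S⌉₊, fun M hM => ?_⟩
  have hM_pos : (0 : ℝ) < M := by exact_mod_cast (le_max_left _ _).trans hM
  have hCM : 2 * C ≤ M * S := by
    rw [← div_le_iff₀ hα]
    exact (Nat.le_ceil _).trans (mod_cast (le_max_right _ _).trans hM)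
  have hbound : (M : ℝ) / 2 * S ≤ ‖∑ p, α p • steer M (f p)‖ ^ 2 := by linarith [hC M]
  refine ⟨fun h0 => ?_, hbound⟩
  rw [h0, norm_zero, zero_pow two_ne_zero] at hbound
  nlinarith

/-- for `P ≥ 1`, frequencies with `f_i − f_j ∉ ℤ` for `i ≠ j`, and gains
with `Σ_p |α_p|² > 0`, the channel `h_M = Σ_p α_p a_M(f_p)` is eventually nonzero; in
fact `‖h_M‖² ≥ (M/2)·Σ_p |α_p|²` for all sufficiently large `M`. -/
theorem stmt12 (P : ℕ) (hP : 1 ≤ P) (f : Fin P → ℝ)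
    (hf : ∀ i j : Fin P, i ≠ j → ∀ k : ℤ, f i - f j ≠ (k : ℝ))
    (α : Fin P → ℂ) (hα : 0 < ∑ p, ‖α p‖ ^ 2) :
    ∃ M₀ : ℕ, ∀ M : ℕ, M₀ ≤ M →
      (∑ p, α p • steer M (f p)) ≠ 0 ∧
      ((M : ℝ) / 2) * ∑ p, ‖α p‖ ^ 2 ≤ ‖∑ p, α p • steer M (f p)‖ ^ 2 :=
  stmt12_general P f hf α hα
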